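/- Conversely, if p_1,...,p_n ∈ ℝ^{n-1} are the vertices of a regular (n-1)-dimensional simplex of edge length √2 with barycenter at the origin, then the n×n matrix A whose i-th row is (1/√n, p_i) is orthogonal. -/

import Mathlib

/-!
Expanding `∑ⱼ ‖pᵢ - pⱼ‖²` with `∑ⱼ pⱼ = 0` gives `m ‖pᵢ‖² + ∑ⱼ ‖pⱼ‖² = (m - 1) d²` for a regular
simplex with `m` vertices and edge `d`, so all `‖pᵢ‖²` equal `(m - 1) d² / (2m)`, and the
polarization identity then gives `⟪pᵢ, pⱼ⟫ = -d² / (2m)` for `i ≠ j`. For `d = √2` and `m = n + 1`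
this says that the rows `(1/√m, pᵢ)` of `A` are orthonormal.
-/

open Real Matrix

open Finset in
theorem sum_dist_sq_of_pairwise_dist_eq {X ι : Type*} [PseudoMetricSpace X] [Fintype ι]
    [DecidableEq ι] {p : ι → X} {d : ℝ} (hdist : ∀ i j, i ≠ j → dist (p i) (p j) = d) (i : ι) :
    ∑ j, dist (p i) (p j) ^ 2 = (Fintype.card ι - 1) * d ^ 2 := by
  rw [← add_sum_erase _ _ (mem_univ i), dist_self,
    sum_congr rfl fun j hj => by rw [hdist i j (ne_of_mem_erase hj).symm]]
  simp [card_erase_of_mem, Nat.cast_sub (Fintype.card_pos_iff.mpr ⟨i⟩)]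

section RegularSimplex

variable {E ι : Type*} [NormedAddCommGroup E] [InnerProductSpace ℝ E] [Fintype ι]

open Finset in
theorem sum_norm_sub_sq_of_sum_eq_zero {p : ι → E} (hsum : ∑ i, p i = 0) (x : E) :
    ∑ j, ‖x - p j‖ ^ 2 = Fintype.card ι * ‖x‖ ^ 2 + ∑ j, ‖p j‖ ^ 2 := by
  have hinner : ∑ j, inner ℝ x (p j) = 0 := by rw [← inner_sum, hsum, inner_zero_right]
  simp only [norm_sub_sq_real, sum_add_distrib, sum_sub_distrib, ← mul_sum, hinner, sum_const,
    card_univ, nsmul_eq_mul]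
  ring

variable [DecidableEq ι] {p : ι → E} {d : ℝ}

theorem norm_sq_of_regular_simplex (hdist : ∀ i j, i ≠ j → dist (p i) (p j) = d)
    (hsum : ∑ i, p i = 0) (i : ι) :
    ‖p i‖ ^ 2 = (Fintype.card ι - 1) * d ^ 2 / (2 * Fintype.card ι) := by
  have hm : 0 < (Fintype.card ι : ℝ) := by exact_mod_cast Fintype.card_pos_iff.mpr ⟨i⟩
  set m := (Fintype.card ι : ℝ)
  set S := ∑ j, ‖p j‖ ^ 2
  have hvertex : ∀ i, m * ‖p i‖ ^ 2 + S = (m - 1) * d ^ 2 := fun i => by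
    rw [← sum_dist_sq_of_pairwise_dist_eq hdist i]
    simp only [dist_eq_norm, sum_norm_sub_sq_of_sum_eq_zero hsum, m, S]
  have hS : 2 * S = (m - 1) * d ^ 2 := by
    have hsum_vertex := Finset.sum_congr rfl fun i (_ : i ∈ Finset.univ) => hvertex i
    simp only [Finset.sum_add_distrib, ← Finset.mul_sum, Finset.sum_const, Finset.card_univ,
      nsmul_eq_mul] at hsum_vertex
    exact mul_left_cancel₀ hm.ne' (by linarith)
  have hi := hvertex i
  field_simp
  linarith

theorem inner_of_regular_simplex (hdist : ∀ i j, i ≠ j → dist (p i) (p j) = d)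
    (hsum : ∑ i, p i = 0) (i j : ι) :
    inner ℝ (p i) (p j) = d ^ 2 / 2 * ((if i = j then 1 else 0) - 1 / Fintype.card ι) := by
  have hm : 0 < (Fintype.card ι : ℝ) := by exact_mod_cast Fintype.card_pos_iff.mpr ⟨i⟩
  have hnorm := norm_sq_of_regular_simplex hdist hsum
  split_ifs with hij
  · rw [hij, real_inner_self_eq_norm_sq, hnorm]
    field_simp
  · have hpolar := norm_sub_sq_real (p i) (p j)
    rw [← dist_eq_norm, hdist i j hij, hnorm, hnorm] at hpolar
    field_simp at hpolar ⊢
    linarith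

end RegularSimplex

theorem stmt1 (n : ℕ) (p : Fin (n + 1) → EuclideanSpace ℝ (Fin n))
    (hdist : ∀ i j, i ≠ j → dist (p i) (p j) = Real.sqrt 2)
    (hsum : ∑ i, p i = 0)
    (A : Matrix (Fin (n + 1)) (Fin (n + 1)) ℝ)
    (hcol : ∀ i, A i 0 = 1 / Real.sqrt (n + 1))
    (hrow : ∀ i (j : Fin n), A i j.succ = p i j) :
    A ∈ Matrix.orthogonalGroup (Fin (n + 1)) ℝ := by
  rw [Matrix.mem_orthogonalGroup_iff]
  ext i j
  have hfirst : A i 0 * A j 0 = 1 / (n + 1) := by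
    rw [hcol, hcol, div_mul_div_comm, one_mul, mul_self_sqrt (by positivity)]
  have hrest : ∑ k : Fin n, A i k.succ * A j k.succ = inner ℝ (p i) (p j) := by
    simp only [hrow, PiLp.inner_apply, RCLike.inner_apply, conj_trivial, mul_comm]
  have hinner := inner_of_regular_simplex hdist hsum i j
  rw [sq_sqrt zero_le_two, Fintype.card_fin, Nat.cast_add_one] at hinner
  rw [mul_apply, Fin.sum_univ_succ]
  simp only [transpose_apply, hfirst, hrest, hinner, one_apply]
  ring
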